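/- arXiv:1105.1580 — 6 statements merged into one kernel-verified Lean document; each statement's English description precedes it below -/
import Mathlib

section
/- Let ω ∈ (0, π) satisfy ω + tan ω = 0, and for each nonnegative integer k let a_k be the unique solution of 2πk = 2πβ·sqrt(1 - (1/(2πβ))²) - arccos(1/(2πβ)) and b_k the unique solution of 2πk = 2πβ·sqrt(1 - (sec ω/(2πβ))²) - arccos(sec ω/(2πβ)). Then a_k < b_k for every k. -/
open Real

/-! With `θ = arccos (1 / t)` one has `√(t² - 1) = tan θ`, so `t ↦ phase 1 t` is `tan θ - θ`
composed with the increasing map `t ↦ θ`, hence strictly increasing on `[1, ∞)`. For `α ≤ -1`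
the square root in `phase α t` is at most the one in `phase 1 t`, while `arccos (α / t) > π / 2 >
arccos (1 / t)`; so `phase α t < phase 1 t`. Since `(cos ω)⁻¹ ≤ -1`, with `A = 2π a_k` and
`B = 2π b_k` this gives `phase 1 A = 2πk = phase (sec ω) B < phase 1 B`, whence `A < B`. -/

/-- The right-hand side of the defining equations of `a_k` and `b_k`, with `t = 2πβ`. -/
noncomputable def phase (α t : ℝ) : ℝ := t * √(1 - (α / t) ^ 2) - arccos (α / t)

lemma strictMonoOn_tan_sub_id : StrictMonoOn (fun x => tan x - x) (Set.Ico 0 (π / 2)) := by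
  have cos_pos {x : ℝ} (hx : x ∈ Set.Ico 0 (π / 2)) : 0 < cos x :=
    cos_pos_of_mem_Ioo ⟨by linarith [hx.1, pi_pos], hx.2⟩
  refine strictMonoOn_of_deriv_pos (convex_Ico 0 (π / 2))
    ((continuousOn_tan.mono fun x hx => (cos_pos hx).ne').sub continuousOn_id) fun x hx => ?_
  rw [interior_Ico] at hx
  have hcos := cos_pos (Set.Ioo_subset_Ico_self hx)
  have hsin : 0 < sin x := sin_pos_of_pos_of_lt_pi hx.1 (by linarith [hx.2, pi_pos])
  have hcos_sq : cos x ^ 2 < 1 := by nlinarith [sin_sq_add_cos_sq x]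
  rw [deriv_tan_sub_id x hcos.ne', sub_pos]
  exact one_lt_one_div (by positivity) hcos_sq

lemma phase_eq_sqrt_sub_arccos (α : ℝ) {t : ℝ} (ht : 0 < t) :
    phase α t = √(t ^ 2 - α ^ 2) - arccos (α / t) := by
  rw [phase, show t ^ 2 - α ^ 2 = t ^ 2 * (1 - (α / t) ^ 2) by field_simp,
    sqrt_mul (sq_nonneg t), sqrt_sq ht.le]

lemma phase_one_eq_tan_sub (t : ℝ) :
    phase 1 t = tan (arccos (1 / t)) - arccos (1 / t) := by
  rw [tan_arccos, phase, div_div_eq_mul_div, div_one, mul_comm]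

lemma strictMonoOn_phase_one : StrictMonoOn (phase 1) (Set.Ici 1) := by
  intro s (hs : 1 ≤ s) t (ht : 1 ≤ t) hst
  have inv_mem {u : ℝ} (hu : 1 ≤ u) : 1 / u ∈ Set.Icc (-1) 1 :=
    ⟨by linarith [one_div_pos.2 (by linarith : (0 : ℝ) < u)], (div_le_one (by linarith)).2 hu⟩
  have arccos_mem {u : ℝ} (hu : 1 ≤ u) : arccos (1 / u) ∈ Set.Ico 0 (π / 2) :=
    ⟨arccos_nonneg _, arccos_lt_pi_div_two.2 (by positivity)⟩
  have harccos : arccos (1 / s) < arccos (1 / t) :=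
    strictAntiOn_arccos (inv_mem ht) (inv_mem hs) (one_div_lt_one_div_of_lt (by linarith) hst)
  rw [phase_one_eq_tan_sub s, phase_one_eq_tan_sub t]
  exact strictMonoOn_tan_sub_id (arccos_mem hs) (arccos_mem ht) harccos

lemma phase_lt_phase_one {α t : ℝ} (hα : α ≤ -1) (ht : 0 < t) : phase α t < phase 1 t := by
  have hsqrt : √(t ^ 2 - α ^ 2) ≤ √(t ^ 2 - 1) := sqrt_le_sqrt (by nlinarith)
  have hα_arccos : π / 2 < arccos (α / t) := by
    have : α / t < 0 := div_neg_of_neg_of_pos (by linarith) ht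
    exact lt_of_not_ge fun h => this.not_ge (arccos_le_pi_div_two.1 h)
  have hone_arccos : arccos (1 / t) < π / 2 := arccos_lt_pi_div_two.2 (by positivity)
  rw [phase_eq_sqrt_sub_arccos α ht, phase_eq_sqrt_sub_arccos 1 ht, one_pow]
  linarith

lemma pi_div_two_lt_of_add_tan_eq_zero {ω : ℝ} (hω : 0 < ω) (hωeq : ω + tan ω = 0) :
    π / 2 < ω := by
  rcases lt_trichotomy ω (π / 2) with h | rfl | h
  · linarith [tan_pos_of_pos_of_lt_pi_div_two hω h]
  · rw [tan_pi_div_two] at hωeq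
    linarith
  · exact h

lemma inv_cos_le_neg_one {ω : ℝ} (hω : ω ∈ Set.Ioo (π / 2) π) : (cos ω)⁻¹ ≤ -1 := by
  have hcos : cos ω < 0 := cos_neg_of_pi_div_two_lt_of_lt hω.1 (by linarith [hω.2, pi_pos])
  rw [← inv_neg_one, inv_le_inv_of_neg hcos (by norm_num)]
  exact neg_one_le_cos ω

theorem stmt_5 (ω : ℝ) (hω : ω ∈ Set.Ioo 0 π) (hωeq : ω + Real.tan ω = 0)
    (a b : ℕ → ℝ)
    (ha : ∀ k, 1 / (2 * π) ≤ a k ∧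
      2 * π * k = 2 * π * a k * Real.sqrt (1 - (1 / (2 * π * a k)) ^ 2)
        - Real.arccos (1 / (2 * π * a k)))
    (hb : ∀ k, |(Real.cos ω)⁻¹| / (2 * π) ≤ b k ∧
      2 * π * k = 2 * π * b k * Real.sqrt (1 - ((Real.cos ω)⁻¹ / (2 * π * b k)) ^ 2)
        - Real.arccos ((Real.cos ω)⁻¹ / (2 * π * b k))) :
    ∀ k, a k < b k := by
  intro k
  have hsec : (cos ω)⁻¹ ≤ -1 :=
    inv_cos_le_neg_one ⟨pi_div_two_lt_of_add_tan_eq_zero hω.1 hωeq, hω.2⟩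
  have h2π : 0 < 2 * π := by positivity
  have hA : 1 ≤ 2 * π * a k := by
    have := (div_le_iff₀ h2π).1 (ha k).1
    linarith
  have hB : 1 ≤ 2 * π * b k := by
    have := (div_le_iff₀ h2π).1 (hb k).1
    rw [abs_of_neg (by linarith)] at this
    linarith
  have hphase : phase 1 (2 * π * a k) < phase 1 (2 * π * b k) :=
    calc phase 1 (2 * π * a k) = phase (cos ω)⁻¹ (2 * π * b k) := (ha k).2.symm.trans (hb k).2
      _ < phase 1 (2 * π * b k) := phase_lt_phase_one hsec (by linarith)
  exact lt_of_mul_lt_mul_left ((strictMonoOn_phase_one.lt_iff_lt hA hB).1 hphase) h2π.le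
end

section
/- Suppose (β₀, v₀) satisfies v₀ = sin(2πβ₀v₀), 1 - 2πβ₀cos(2πβ₀v₀) ≠ 0, and let g be the implicit function with g(β₀) = v₀ and g(β) = sin(2πβg(β)) near β₀. Then d/dβ [β·cos(2πβg(β))] = (cos(2πβg(β)) - 2πβ) / (1 - 2πβcos(2πβg(β))) in a neighborhood of β₀. -/
open Real

theorem stmt_10 (β₀ v₀ ε : ℝ) (hε : 0 < ε) (g : ℝ → ℝ)
    (hss : v₀ = Real.sin (2 * π * β₀ * v₀))
    (hg0 : g β₀ = v₀)
    (hg : ∀ β ∈ Set.Ioo (β₀ - ε) (β₀ + ε),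
      g β = Real.sin (2 * π * β * g β) ∧
      1 - 2 * π * β * Real.cos (2 * π * β * g β) ≠ 0 ∧
      DifferentiableAt ℝ g β) :
    ∀ β ∈ Set.Ioo (β₀ - ε) (β₀ + ε),
      HasDerivAt (fun β => β * Real.cos (2 * π * β * g β))
        ((Real.cos (2 * π * β * g β) - 2 * π * β) /
          (1 - 2 * π * β * Real.cos (2 * π * β * g β))) β := by
  intro β hβ
  obtain ⟨heq, hden, hdiff⟩ := hg β hβ
  set g' := deriv g β with hg'def
  have hdg : HasDerivAt g g' β := hdiff.hasDerivAt
  -- derivative of inner function b ↦ 2πb * g b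
  have hlin : HasDerivAt (fun b => 2 * π * b * g b)
      (2 * π * 1 * g β + 2 * π * β * g') β := by
    exact (((hasDerivAt_id β).const_mul (2 * π)).mul hdg)
  have hsin : HasDerivAt (fun b => Real.sin (2 * π * b * g b))
      (Real.cos (2 * π * β * g β) * (2 * π * 1 * g β + 2 * π * β * g')) β :=
    (Real.hasDerivAt_sin _).comp β hlin
  have heqev : (fun b => Real.sin (2 * π * b * g b)) =ᶠ[nhds β] g := by
    filter_upwards [isOpen_Ioo.mem_nhds hβ] with b hb
    exact ((hg b hb).1).symm
  have hg2 : HasDerivAt g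
      (Real.cos (2 * π * β * g β) * (2 * π * 1 * g β + 2 * π * β * g')) β :=
    hsin.congr_of_eventuallyEq heqev.symm
  have hgd : g' = Real.cos (2 * π * β * g β) * (2 * π * 1 * g β + 2 * π * β * g') :=
    hdg.unique hg2
  have hcos : HasDerivAt (fun b => Real.cos (2 * π * b * g b))
      (-Real.sin (2 * π * β * g β) * (2 * π * 1 * g β + 2 * π * β * g')) β :=
    (Real.hasDerivAt_cos _).comp β hlin
  have htarget : HasDerivAt (fun b => b * Real.cos (2 * π * b * g b))
      (1 * Real.cos (2 * π * β * g β) +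
        β * (-Real.sin (2 * π * β * g β) * (2 * π * 1 * g β + 2 * π * β * g'))) β :=
    (hasDerivAt_id β).mul hcos
  have hpyth : Real.sin (2 * π * β * g β) ^ 2 + Real.cos (2 * π * β * g β) ^ 2 = 1 :=
    Real.sin_sq_add_cos_sq _
  rw [← heq] at hpyth
  have hval : (Real.cos (2 * π * β * g β) - 2 * π * β) /
      (1 - 2 * π * β * Real.cos (2 * π * β * g β)) =
      1 * Real.cos (2 * π * β * g β) +
        β * (-Real.sin (2 * π * β * g β) * (2 * π * 1 * g β + 2 * π * β * g')) := by
    rw [div_eq_iff hden, ← heq]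
    linear_combination (2 * π * β) * hpyth + (2 * π * β ^ 2 * g β) * hgd
  rw [hval]
  exact htarget
end

section
/- For each nonnegative integer k, let a_k be the unique solution of 2πk = 2πβ·sqrt(1 - (1/(2πβ))²) - arccos(1/(2πβ)) and set y_k = k/a_k + (1/(2πa_k))·arccos(1/(2πa_k)). Then the pair (a_k, y_k) satisfies y_k = sin(2πa_k y_k) and 2πa_k·cos(2πa_k y_k) = 1. -/
open Real

/-! With `t = 2πa ≥ 1` and `θ = arccos (1/t)`, the definition of `y` says `t y = 2πk + θ`, so
`sin (t y) = sin θ = √(1 - 1/t²)` and `cos (t y) = 1/t`. The equation defining `a` says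
`t √(1 - 1/t²) = 2πk + θ = t y`, i.e. `y = sin θ`. -/

theorem Real.sin_two_pi_mul_nat_add_arccos (k : ℕ) (x : ℝ) :
    sin (2 * π * k + arccos x) = √(1 - x ^ 2) := by
  rw [add_comm, mul_comm, sin_add_nat_mul_two_pi, sin_arccos]

theorem Real.cos_two_pi_mul_nat_add_arccos (k : ℕ) {x : ℝ} (hx₁ : -1 ≤ x) (hx₂ : x ≤ 1) :
    cos (2 * π * k + arccos x) = x := by
  rw [add_comm, mul_comm, cos_add_nat_mul_two_pi, cos_arccos hx₁ hx₂]

theorem stmt_14 (k : ℕ) (a y : ℝ)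
    (ha : 1 / (2 * π) ≤ a ∧
      2 * π * k = 2 * π * a * Real.sqrt (1 - (1 / (2 * π * a)) ^ 2)
        - Real.arccos (1 / (2 * π * a)))
    (hy : y = k / a + 1 / (2 * π * a) * Real.arccos (1 / (2 * π * a))) :
    y = Real.sin (2 * π * a * y) ∧ 2 * π * a * Real.cos (2 * π * a * y) = 1 := by
  obtain ⟨ha_ge, hk⟩ := ha
  have ha_pos : 0 < a := lt_of_lt_of_le (by positivity) ha_ge
  set t := 2 * π * a with ht_def
  have ht : 1 ≤ t := by rwa [div_le_iff₀ (by positivity), mul_comm] at ha_ge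
  have ht_pos : 0 < t := by linarith
  have hphase : t * y = 2 * π * k + arccos (1 / t) := by
    rw [hy, ht_def]; field_simp
  have hy_eq : y = √(1 - (1 / t) ^ 2) := mul_left_cancel₀ ht_pos.ne' (by linarith)
  have hc₁ : 1 / t ≤ 1 := (div_le_one ht_pos).2 ht
  have hc₀ : -1 ≤ 1 / t := by linarith [one_div_pos.2 ht_pos]
  constructor
  · rw [hphase, sin_two_pi_mul_nat_add_arccos, hy_eq]
  · rw [hphase, cos_two_pi_mul_nat_add_arccos k hc₀ hc₁, mul_one_div_cancel ht_pos.ne']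
end

section
/- Let ω ∈ (0, π) satisfy ω + tan ω = 0. For each nonnegative integer k, let b_k be the unique solution of 2πk = 2πβ·sqrt(1 - (sec ω/(2πβ))²) - arccos(sec ω/(2πβ)) and set z_k = k/b_k + (1/(2πb_k))·arccos(sec ω/(2πb_k)). Then z_k = sin(2πb_k z_k) and 2πb_k·cos(2πb_k z_k) = sec ω. -/
/-!
With `s = sec ω` and `c = s / (2πb)`, the formula for `z` says exactly that `2πb·z = arccos c + 2πk`, so
`cos (2πb·z) = c` (which needs `|c| ≤ 1`) and `sin (2πb·z) = √(1 - c²)`. The defining equation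
of `b` rewrites as `2πb·√(1 - c²) = 2πk + arccos c = 2πb·z`, i.e. `z = √(1 - c²)`.
-/

open Real

lemma pos_of_two_pi_mul_nat_eq_sqrt_sub_arccos {s b : ℝ} {k : ℕ} (hb : 0 ≤ b)
    (hk : 2 * π * k = 2 * π * b * √(1 - (s / (2 * π * b)) ^ 2) - arccos (s / (2 * π * b))) :
    0 < b := by
  refine hb.lt_of_ne fun hb0 => ?_
  subst hb0
  have hk0 : 0 ≤ 2 * π * k := by positivity
  simp only [mul_zero, zero_mul, div_zero, arccos_zero, zero_sub] at hk
  linarith [pi_pos]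

lemma two_pi_mul_mul_nat_div_add_arccos {b : ℝ} (hb : b ≠ 0) (k : ℕ) (c : ℝ) :
    2 * π * b * (k / b + 1 / (2 * π * b) * arccos c) = arccos c + k * (2 * π) := by
  field_simp
  ring

theorem eq_sin_and_two_pi_mul_cos_eq {s b z : ℝ} {k : ℕ} (hb : |s| / (2 * π) ≤ b)
    (hk : 2 * π * k = 2 * π * b * √(1 - (s / (2 * π * b)) ^ 2) - arccos (s / (2 * π * b)))
    (hz : z = k / b + 1 / (2 * π * b) * arccos (s / (2 * π * b))) :
    z = sin (2 * π * b * z) ∧ 2 * π * b * cos (2 * π * b * z) = s := by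
  have hb_pos : 0 < b :=
    pos_of_two_pi_mul_nat_eq_sqrt_sub_arccos ((div_nonneg (abs_nonneg s) two_pi_pos.le).trans hb) hk
  have hθ : 0 < 2 * π * b := by positivity
  set c := s / (2 * π * b)
  have hc : |c| ≤ 1 := by
    rw [abs_div, abs_of_pos hθ, div_le_one hθ]
    linarith [(div_le_iff₀ two_pi_pos).1 hb]
  have hangle : 2 * π * b * z = arccos c + k * (2 * π) := by
    rw [hz, two_pi_mul_mul_nat_div_add_arccos hb_pos.ne']
  have hz_sqrt : z = √(1 - c ^ 2) :=
    mul_left_cancel₀ hθ.ne' (by linarith)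
  constructor
  · rw [hangle, sin_add_nat_mul_two_pi, sin_arccos, hz_sqrt]
  · rw [hangle, cos_add_nat_mul_two_pi, cos_arccos (abs_le.1 hc).1 (abs_le.1 hc).2]
    exact mul_div_cancel₀ s hθ.ne'

theorem stmt_15_general (ω : ℝ)
    (k : ℕ) (b z : ℝ)
    (hb : |(Real.cos ω)⁻¹| / (2 * π) ≤ b ∧
      2 * π * k = 2 * π * b * Real.sqrt (1 - ((Real.cos ω)⁻¹ / (2 * π * b)) ^ 2)
        - Real.arccos ((Real.cos ω)⁻¹ / (2 * π * b)))
    (hz : z = k / b + 1 / (2 * π * b) * Real.arccos ((Real.cos ω)⁻¹ / (2 * π * b))) :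
    z = Real.sin (2 * π * b * z) ∧
      2 * π * b * Real.cos (2 * π * b * z) = (Real.cos ω)⁻¹ :=
  eq_sin_and_two_pi_mul_cos_eq hb.1 hb.2 hz

theorem stmt_15 (ω : ℝ) (hω : ω ∈ Set.Ioo 0 π) (hωeq : ω + Real.tan ω = 0)
    (k : ℕ) (b z : ℝ)
    (hb : |(Real.cos ω)⁻¹| / (2 * π) ≤ b ∧
      2 * π * k = 2 * π * b * Real.sqrt (1 - ((Real.cos ω)⁻¹ / (2 * π * b)) ^ 2)
        - Real.arccos ((Real.cos ω)⁻¹ / (2 * π * b)))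
    (hz : z = k / b + 1 / (2 * π * b) * Real.arccos ((Real.cos ω)⁻¹ / (2 * π * b))) :
    z = Real.sin (2 * π * b * z) ∧
      2 * π * b * Real.cos (2 * π * b * z) = (Real.cos ω)⁻¹ :=
  stmt_15_general ω k b z hb hz
end

section
/- Let h be a differentiable function on an interval J ⊆ (0, 1] of positive reals such that v = sin(2πh(v)v) for all v ∈ J and cos(2πh(v)v) > 0 and h(v) > 1/(2π) and 2πh(v)cos(2πh(v)v) > 1 on J. Then h is strictly decreasing on J. -/
/-!
Differentiating the identity `v = sin (2π h(v) v)` gives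
`cos (2π h v v) · 2π (h' v · v + h v) = 1`, that is
`2π v cos (2π h v v) · h' v = 1 - 2π h v cos (2π h v v) < 0`,
so `h' < 0` on the interior of `J`, where `v` and the cosine are positive.
-/

open Real

theorem cos_mul_eq_one_of_sin_eventuallyEq_id {g : ℝ → ℝ} {g' v : ℝ}
    (hg : HasDerivAt g g' v) (hsin : (fun x => sin (g x)) =ᶠ[nhds v] id) :
    cos (g v) * g' = 1 :=
  (hg.sin.congr_of_eventuallyEq hsin.symm).unique (hasDerivAt_id v)

theorem HasDerivAt.const_mul_mul_id {h : ℝ → ℝ} {h' v : ℝ} (a : ℝ) (hh : HasDerivAt h h' v) :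
    HasDerivAt (fun x => a * h x * x) (a * (h' * v + h v)) v :=
  ((hh.const_mul a).mul (hasDerivAt_id' v)).congr_deriv (by ring)

theorem deriv_neg_of_sin_const_mul_mul_eventuallyEq_id {h : ℝ → ℝ} {a v : ℝ} (ha : 0 < a)
    (hv : 0 < v) (hdiff : DifferentiableAt ℝ h v)
    (himp : (fun x => sin (a * h x * x)) =ᶠ[nhds v] id)
    (hcos : 0 < cos (a * h v * v))
    (hgt : 1 < a * h v * cos (a * h v * v)) :
    deriv h v < 0 := by
  have key := cos_mul_eq_one_of_sin_eventuallyEq_id (hdiff.hasDerivAt.const_mul_mul_id a) himp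
  have hscale : 0 < a * v * cos (a * h v * v) := by positivity
  nlinarith

theorem stmt_16_general (J : Set ℝ) (hJ : J ⊆ Set.Ioc 0 1) (hJconv : Convex ℝ J)
    (h : ℝ → ℝ) (hdiff : ∀ v ∈ J, DifferentiableAt ℝ h v)
    (himp : ∀ v ∈ J, v = Real.sin (2 * π * h v * v))
    (hcos : ∀ v ∈ J, 0 < Real.cos (2 * π * h v * v))
    (hgt : ∀ v ∈ J, 1 < 2 * π * h v * Real.cos (2 * π * h v * v)) :
    StrictAntiOn h J := by
  refine strictAntiOn_of_deriv_neg hJconv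
    (fun v hv => (hdiff v hv).continuousAt.continuousWithinAt) fun v hv => ?_
  have hvJ : v ∈ J := interior_subset hv
  have himp_near : (fun x => sin (2 * π * h x * x)) =ᶠ[nhds v] id := by
    filter_upwards [isOpen_interior.mem_nhds hv] with x hx
    exact (himp x (interior_subset hx)).symm
  exact deriv_neg_of_sin_const_mul_mul_eventuallyEq_id two_pi_pos (hJ hvJ).1 (hdiff v hvJ)
    himp_near (hcos v hvJ) (hgt v hvJ)

theorem stmt_16 (J : Set ℝ) (hJ : J ⊆ Set.Ioc 0 1) (hJconv : Convex ℝ J)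
    (h : ℝ → ℝ) (hdiff : ∀ v ∈ J, DifferentiableAt ℝ h v)
    (himp : ∀ v ∈ J, v = Real.sin (2 * π * h v * v))
    (hcos : ∀ v ∈ J, 0 < Real.cos (2 * π * h v * v))
    (hh : ∀ v ∈ J, 1 / (2 * π) < h v)
    (hgt : ∀ v ∈ J, 1 < 2 * π * h v * Real.cos (2 * π * h v * v)) :
    StrictAntiOn h J :=
  stmt_16_general J hJ hJconv h hdiff himp hcos hgt
end

section
/- Let ω ∈ (0, π) be the root of ω + tan ω = 0, and suppose v* satisfies v* = sin(2πβv*) with sec ω < 2πβ·cos(2πβv*) < 1. Then every root λ of the characteristic equation λ = -1 + 2πβ·cos(2πβv*)·e^{-λ} has negative real part (i.e., the steady state v(t) ≡ v* of dv/dt = -v + sin(2πβ v(t-1)) is locally asymptotically stable). -/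
open Real

set_option maxHeartbeats 1000000 in
lemma aux_stab (ω a μ ν E : ℝ) (hω1 : π/2 < ω) (hω2 : ω < π)
    (hωeq : ω + Real.tan ω = 0)
    (hlow : (Real.cos ω)⁻¹ < a) (hup : a < 1)
    (hμ : 0 ≤ μ) (hν0 : 0 ≤ ν) (hEpos : 0 < E) (hE1 : E ≤ 1)
    (h1 : μ + 1 = a * E * Real.cos ν) (h2 : ν = -(a * E * Real.sin ν)) : False := by
  have hcosω : Real.cos ω < 0 :=
    Real.cos_neg_of_pi_div_two_lt_of_lt hω1 (by linarith [Real.pi_pos])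
  have hcosω' : Real.cos ω ≠ 0 := ne_of_lt hcosω
  have htanω : Real.tan ω = -ω := by linarith
  have hsinω : Real.sin ω = -ω * Real.cos ω := by
    have := Real.tan_eq_sin_div_cos ω
    rw [htanω] at this
    field_simp at this
    linarith
  have hsec : Real.cos ω ^ 2 * (1 + ω ^ 2) = 1 := by
    have h := Real.sin_sq_add_cos_sq ω
    rw [hsinω] at h
    nlinarith
  have hpy := Real.sin_sq_add_cos_sq ν
  have hsum : (μ + 1) ^ 2 + ν ^ 2 = a ^ 2 * E ^ 2 := by
    linear_combination (μ + 1 + a * E * Real.cos ν) * h1 +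
      (ν - a * E * Real.sin ν) * h2 + (a * E) ^ 2 * hpy
  by_cases ha : -1 < a
  · have ha2 : a ^ 2 < 1 := by nlinarith
    have hE2 : E ^ 2 ≤ 1 := by nlinarith
    have h3 : a ^ 2 * E ^ 2 ≤ a ^ 2 := by
      nlinarith [mul_nonneg (sq_nonneg a) (show (0:ℝ) ≤ 1 - E ^ 2 by linarith)]
    have h4 : 1 ≤ (μ + 1) ^ 2 := by nlinarith [sq_nonneg μ]
    linarith [sq_nonneg ν]
  · push_neg at ha
    have hinv2 : (Real.cos ω)⁻¹ ^ 2 = 1 + ω ^ 2 := by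
      rw [inv_pow, inv_eq_iff_eq_inv, inv_eq_one_div]
      rw [eq_div_iff (by positivity : (1 + ω ^ 2) ≠ 0)]
      linarith [hsec]
    have hinvneg : (Real.cos ω)⁻¹ < 0 := inv_lt_zero.mpr hcosω
    have hprod : 0 < ((Real.cos ω)⁻¹ - a) * ((Real.cos ω)⁻¹ + a) :=
      mul_pos_of_neg_of_neg (by linarith) (by linarith)
    have ha2 : a ^ 2 < 1 + ω ^ 2 := by nlinarith [hprod, hinv2]
    have hE2 : E ^ 2 ≤ 1 := by
      have := pow_le_pow_left₀ (le_of_lt hEpos) hE1 2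
      simpa using this
    have h3 : a ^ 2 * E ^ 2 ≤ a ^ 2 := by
      nlinarith [mul_nonneg (sq_nonneg a) (show (0:ℝ) ≤ 1 - E ^ 2 by linarith)]
    have h4 : 1 ≤ (μ + 1) ^ 2 := by nlinarith [sq_nonneg μ]
    have hν2 : ν ^ 2 < ω ^ 2 := by linarith [hsum]
    have hωpos : 0 < ω := by linarith [Real.pi_pos]
    have hνω : ν < ω := by nlinarith
    have haE : a * E < 0 := mul_neg_of_neg_of_pos (by linarith) hEpos
    have hcosν : Real.cos ν < 0 := by
      by_contra h
      push_neg at h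
      nlinarith
    have hν1 : π / 2 < ν := by
      by_contra h
      push_neg at h
      have : 0 ≤ Real.cos ν := Real.cos_nonneg_of_mem_Icc ⟨by linarith, h⟩
      linarith
    have hsinν : 0 < Real.sin ν :=
      Real.sin_pos_of_pos_of_lt_pi (by linarith [Real.pi_pos]) (by linarith)
    have htan : (μ + 1) * Real.sin ν = -(ν * Real.cos ν) := by
      rw [h1]
      nlinarith [h2]
    have hcosν' : Real.cos ν ≠ 0 := ne_of_lt hcosν
    have htanν : Real.tan ν = -ν / (μ + 1) := by
      rw [Real.tan_eq_sin_div_cos]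
      rw [div_eq_div_iff hcosν' (by linarith : μ + 1 ≠ 0)]
      linarith [htan]
    have hge : 0 ≤ ν + Real.tan ν := by
      rw [htanν]
      have heq : ν + -ν / (μ + 1) = ν * μ / (μ + 1) := by
        field_simp
        ring
      rw [heq]
      positivity
    have hmem1 : ν - π ∈ Set.Ioo (-(π/2)) (π/2) := by
      constructor <;> [linarith; linarith [Real.pi_pos]]
    have hmem2 : ω - π ∈ Set.Ioo (-(π/2)) (π/2) := by
      constructor <;> [linarith; linarith [Real.pi_pos]]
    have hmono := Real.strictMonoOn_tan hmem1 hmem2 (by linarith : ν - π < ω - π)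
    rw [Real.tan_sub_pi, Real.tan_sub_pi] at hmono
    linarith

lemma key_stab (ω a : ℝ) (hω1 : π/2 < ω) (hω2 : ω < π) (hωeq : ω + Real.tan ω = 0)
    (hlow : (Real.cos ω)⁻¹ < a) (hup : a < 1) :
    ∀ lam : ℂ, lam = -1 + (a : ℂ) * Complex.exp (-lam) → lam.re < 0 := by
  intro lam hlam
  by_contra hre
  push_neg at hre
  have hre1 := congrArg Complex.re hlam
  have him1 := congrArg Complex.im hlam
  simp [Complex.exp_re, Complex.exp_im, Complex.add_re, Complex.add_im, Complex.mul_re,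
    Complex.mul_im, Complex.neg_re, Complex.neg_im, Complex.one_re, Complex.one_im,
    Complex.ofReal_re, Complex.ofReal_im, Real.cos_neg, Real.sin_neg] at hre1 him1
  set μ := lam.re with hμdef
  set t := lam.im with htdef
  have hEpos : 0 < Real.exp (-μ) := Real.exp_pos _
  have hE1 : Real.exp (-μ) ≤ 1 := Real.exp_le_one_iff.mpr (by linarith)
  have h1 : μ + 1 = a * Real.exp (-μ) * Real.cos |t| := by
    rcases abs_cases t with ⟨h, _⟩ | ⟨h, _⟩
    · rw [h]; linarith [hre1]
    · rw [h, Real.cos_neg]; linarith [hre1]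
  have h2 : |t| = -(a * Real.exp (-μ) * Real.sin |t|) := by
    rcases abs_cases t with ⟨h, _⟩ | ⟨h, _⟩
    · rw [h]; linarith [him1]
    · rw [h, Real.sin_neg]; linarith [him1]
  exact aux_stab ω a μ |t| (Real.exp (-μ)) hω1 hω2 hωeq hlow hup hre (abs_nonneg t)
    hEpos hE1 h1 h2

theorem stmt_18 (ω : ℝ) (hω : ω ∈ Set.Ioo 0 π) (hωeq : ω + Real.tan ω = 0)
    (β v : ℝ) (hss : v = Real.sin (2 * π * β * v))
    (hlow : (Real.cos ω)⁻¹ < 2 * π * β * Real.cos (2 * π * β * v))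
    (hup : 2 * π * β * Real.cos (2 * π * β * v) < 1) :
    ∀ lam : ℂ,
      lam = -1 + (2 * π * β * Real.cos (2 * π * β * v) : ℝ) * Complex.exp (-lam) →
        lam.re < 0 := by
  obtain ⟨hω0, hωπ⟩ := hω
  have hω1 : π / 2 < ω := by
    rcases lt_trichotomy ω (π/2) with h | h | h
    · have := Real.tan_pos_of_pos_of_lt_pi_div_two hω0 h
      linarith
    · rw [h, Real.tan_pi_div_two] at hωeq
      linarith [Real.pi_pos]
    · exact h
  exact key_stab ω _ hω1 hωπ hωeq hlow hup
end
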